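/- arXiv:2209.11113 — 2 statements merged into one kernel-verified Lean document; each statement's English description precedes it below -/
import Mathlib

section
/- Under Assumptions 1, 2, and 3, the D2EAL social prediction regret with respect to the best expert satisfies \hat{L}_{T,i} - L_{T,i*} ≤ η_w T/8 + (log d_i(0))/η_w + η_α T/8 + (log 2)/η_α + L1·Δ_o, for every agent i. -/
/-!
Both layers of D2EAL are exponential-weights forecasters with convex losses in `[0, 1]`, so by
Jensen each round's loss is at most the weighted average of the experts' losses, and Hoeffding's
lemma bounds that average by `η / 8` plus the drop of the log-potential `log ∑ exp (-η L)`.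
Telescoping, the potential starts at `log |Λ 0|` (at `log 2` for the two-expert first layer) and
never drops below `-η` times the cumulative loss of a surviving expert; shrinking the expert set
only lowers the potential further. This gives the social regret against the agent's own
individual prediction and the individual regret against its own expert; the Lipschitz bound
then compares that expert with the best one.
-/

open Real

open MeasureTheory ProbabilityTheory in
theorem sum_mul_exp_le_exp {ι : Type*} (S : Finset ι) {p ℓ : ι → ℝ}
    (hp0 : ∀ j ∈ S, 0 ≤ p j) (hp1 : ∑ j ∈ S, p j = 1)
    (hℓ : ∀ j ∈ S, ℓ j ∈ Set.Icc (0 : ℝ) 1) (s : ℝ) :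
    ∑ j ∈ S, p j * exp (s * ℓ j) ≤ exp (s * ∑ j ∈ S, p j * ℓ j + s ^ 2 / 8) := by
  -- Hoeffding's lemma, applied to the distribution `p` on `S` as a sum of Dirac masses.
  let _ : MeasurableSpace ι := ⊤
  have _ : MeasurableSingletonClass ι := ⟨fun _ => trivial⟩
  let μ : Measure ι := ∑ j ∈ S, ENNReal.ofReal (p j) • Measure.dirac j
  have integral_eq (g : ι → ℝ) : ∫ x, g x ∂μ = ∑ j ∈ S, p j * g j := by
    rw [integral_finsetSum_measure fun j _ => (integrable_dirac (by simp)).smul_measure (by simp)]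
    refine Finset.sum_congr rfl fun j hj => ?_
    rw [integral_smul_measure, integral_dirac, ENNReal.toReal_ofReal (hp0 j hj), smul_eq_mul]
  have _ : IsProbabilityMeasure μ := ⟨by
    simp [μ, ← ENNReal.ofReal_sum_of_nonneg hp0, hp1]⟩
  have hbound : ∀ᵐ x ∂μ, ℓ x ∈ Set.Icc (0 : ℝ) 1 := by
    rw [ae_iff]
    simp only [μ, Measure.coe_finsetSum, Finset.sum_apply, Measure.smul_apply,
      Measure.dirac_apply, smul_eq_mul]
    exact Finset.sum_eq_zero fun j hj => by simp [(hℓ j hj).1, (hℓ j hj).2]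
  have hoeffding := (hasSubgaussianMGF_of_mem_Icc measurable_from_top.aemeasurable hbound).mgf_le s
  have hc : ((‖(1 : ℝ) - 0‖₊ / 2) ^ 2 : NNReal) * s ^ 2 / 2 = s ^ 2 / 8 := by
    norm_num; ring
  simp only [mgf, integral_eq, hc] at hoeffding
  set m := ∑ j ∈ S, p j * ℓ j
  calc ∑ j ∈ S, p j * exp (s * ℓ j) = exp (s * m) * ∑ j ∈ S, p j * exp (s * (ℓ j - m)) := by
        rw [Finset.mul_sum]
        refine Finset.sum_congr rfl fun j _ => ?_
        rw [mul_left_comm, ← exp_add]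
        ring_nf
    _ ≤ exp (s * m) * exp (s ^ 2 / 8) := by gcongr
    _ = exp (s * m + s ^ 2 / 8) := (exp_add _ _).symm

section ExpWeights

variable {ι : Type*}

noncomputable def expSum (η : ℝ) (S : Finset ι) (L : ι → ℝ) : ℝ :=
  ∑ k ∈ S, exp (-η * L k)

noncomputable def expWeight (η : ℝ) (S : Finset ι) (L : ι → ℝ) (j : ι) : ℝ :=
  exp (-η * L j) / expSum η S L

theorem expSum_pos (η : ℝ) {S : Finset ι} (hS : S.Nonempty) (L : ι → ℝ) : 0 < expSum η S L :=
  Finset.sum_pos (fun _ _ => exp_pos _) hS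

theorem expWeight_nonneg (η : ℝ) (S : Finset ι) (L : ι → ℝ) (j : ι) : 0 ≤ expWeight η S L j :=
  div_nonneg (exp_pos _).le (Finset.sum_nonneg fun _ _ => (exp_pos _).le)

theorem sum_expWeight (η : ℝ) {S : Finset ι} (hS : S.Nonempty) (L : ι → ℝ) :
    ∑ j ∈ S, expWeight η S L j = 1 := by
  simp only [expWeight, ← Finset.sum_div]
  exact div_self (expSum_pos η hS L).ne'

theorem expSum_le_of_subset (η : ℝ) {S S' : Finset ι} (h : S' ⊆ S) (L : ι → ℝ) :
    expSum η S' L ≤ expSum η S L :=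
  Finset.sum_le_sum_of_subset_of_nonneg h fun _ _ _ => (exp_pos _).le

theorem sum_expWeight_mul_le {η : ℝ} (hη : 0 < η) {S S' : Finset ι} (hS' : S' ⊆ S)
    (hne : S'.Nonempty) (L ℓ : ι → ℝ) (hℓ : ∀ j ∈ S, ℓ j ∈ Set.Icc (0 : ℝ) 1) :
    ∑ j ∈ S, expWeight η S L j * ℓ j
      ≤ η / 8 + (log (expSum η S L) - log (expSum η S' fun k => L k + ℓ k)) / η := by
  have hS : S.Nonempty := hne.mono hS'
  have hZ := expSum_pos η hS L
  have hZ' := expSum_pos η hne fun k => L k + ℓ k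
  have hmix : ∑ j ∈ S, expWeight η S L j * exp (-η * ℓ j)
      = expSum η S (fun k => L k + ℓ k) / expSum η S L := by
    simp only [expWeight, expSum, Finset.sum_div, div_mul_eq_mul_div, ← exp_add, mul_add]
  have hoeffding := sum_mul_exp_le_exp S (fun j _ => expWeight_nonneg η S L j)
    (sum_expWeight η hS L) hℓ (-η)
  rw [hmix, div_le_iff₀ hZ] at hoeffding
  set m := ∑ j ∈ S, expWeight η S L j * ℓ j
  have hlog : log (expSum η S' fun k => L k + ℓ k)
      ≤ (-η * m + (-η) ^ 2 / 8) + log (expSum η S L) := by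
    calc log (expSum η S' fun k => L k + ℓ k)
        ≤ log (exp (-η * m + (-η) ^ 2 / 8) * expSum η S L) :=
          log_le_log hZ' ((expSum_le_of_subset η hS' _).trans hoeffding)
      _ = (-η * m + (-η) ^ 2 / 8) + log (expSum η S L) := by
          rw [log_mul (exp_pos _).ne' hZ.ne', log_exp]
  calc m = η * m / η := by field_simp
    _ ≤ (η ^ 2 / 8 + (log (expSum η S L) - log (expSum η S' fun k => L k + ℓ k))) / η := by
        gcongr; linarith
    _ = _ := by field_simp

theorem hedge_regret_le {η : ℝ} (hη : 0 < η) (Λ : ℕ → Finset ι) (hΛ : ∀ t, Λ (t + 1) ⊆ Λ t)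
    (ℓ : ℕ → ι → ℝ) (hℓ : ∀ t, ∀ j ∈ Λ t, ℓ t j ∈ Set.Icc (0 : ℝ) 1) (T : ℕ) {j : ι}
    (hj : j ∈ Λ T) :
    ∑ t ∈ Finset.range T, ∑ k ∈ Λ t,
        expWeight η (Λ t) (fun k => ∑ s ∈ Finset.range t, ℓ s k) k * ℓ t k
      ≤ ∑ t ∈ Finset.range T, ℓ t j + η * T / 8 + log (Λ 0).card / η := by
  set Φ : ℕ → ℝ := fun t => log (expSum η (Λ t) fun k => ∑ s ∈ Finset.range t, ℓ s k)
  have hmem : ∀ t ≤ T, j ∈ Λ t := fun t ht => antitone_nat_of_succ_le hΛ ht hj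
  have hround : ∀ t ∈ Finset.range T,
      ∑ k ∈ Λ t, expWeight η (Λ t) (fun k => ∑ s ∈ Finset.range t, ℓ s k) k * ℓ t k
        ≤ η / 8 + (Φ t - Φ (t + 1)) / η := by
    intro t ht
    simpa only [Φ, Finset.sum_range_succ] using
      sum_expWeight_mul_le hη (hΛ t) ⟨j, hmem (t + 1) (Finset.mem_range.1 ht)⟩ _ (ℓ t) (hℓ t)
  have hΦ0 : Φ 0 = log (Λ 0).card := by simp [Φ, expSum]
  have hΦT : -∑ t ∈ Finset.range T, ℓ t j ≤ Φ T / η := by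
    rw [le_div_iff₀ hη, ← log_exp (_ * η)]
    refine log_le_log (exp_pos _) ?_
    calc exp ((-∑ t ∈ Finset.range T, ℓ t j) * η) = exp (-η * ∑ t ∈ Finset.range T, ℓ t j) := by
          ring_nf
      _ ≤ _ := Finset.single_le_sum (f := fun k => exp (-η * ∑ s ∈ Finset.range T, ℓ s k))
          (fun _ _ => (exp_pos _).le) hj
  calc _ ≤ ∑ t ∈ Finset.range T, (η / 8 + (Φ t - Φ (t + 1)) / η) := Finset.sum_le_sum hround
    _ = η * T / 8 + (Φ 0 - Φ T) / η := by
        simp only [Finset.sum_add_distrib, Finset.sum_const, Finset.card_range, nsmul_eq_mul,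
          ← Finset.sum_div, Finset.sum_range_sub']
        ring
    _ ≤ _ := by rw [sub_div, hΦ0]; linarith

theorem hedge_two_regret_le {η : ℝ} (hη : 0 < η) (a b : ℕ → ℝ)
    (ha : ∀ t, a t ∈ Set.Icc (0 : ℝ) 1) (hb : ∀ t, b t ∈ Set.Icc (0 : ℝ) 1) (α : ℕ → ℝ)
    (hα : ∀ t, α t = exp (-η * ∑ s ∈ Finset.range t, a s)
      / (exp (-η * ∑ s ∈ Finset.range t, a s) + exp (-η * ∑ s ∈ Finset.range t, b s)))
    (T : ℕ) :
    ∑ t ∈ Finset.range T, (α t * a t + (1 - α t) * b t)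
      ≤ ∑ t ∈ Finset.range T, a t + η * T / 8 + log 2 / η := by
  have hedge := hedge_regret_le hη (fun _ => Finset.univ) (fun _ => subset_rfl)
    (fun t c => if c then a t else b t) (fun t c _ => by cases c; exacts [hb t, ha t]) T
    (Finset.mem_univ true)
  simp only [Fintype.sum_bool, if_true, Bool.false_eq_true, if_false, Finset.card_univ,
    Fintype.card_bool, Nat.cast_ofNat] at hedge
  refine (Finset.sum_congr rfl fun t _ => ?_).trans_le hedge
  simp only [expWeight, expSum, Fintype.sum_bool, if_true, Bool.false_eq_true, if_false, hα]
  field_simp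
  ring

end ExpWeights

theorem sum_sub_sum_le_of_lipschitz {E Y : Type*} [SeminormedAddCommGroup E] {l : E → Y → ℝ}
    {K : ℝ} (hK : 0 ≤ K) (hl : ∀ x₁ x₂ y, |l x₁ y - l x₂ y| ≤ K * ‖x₁ - x₂‖) {u v : ℕ → E}
    (y : ℕ → Y) {δ : ℕ → ℝ} (hδ : ∀ t, ‖u t - v t‖ ≤ δ t) (T : ℕ) :
    ∑ t ∈ Finset.range T, l (u t) (y t) - ∑ t ∈ Finset.range T, l (v t) (y t)
      ≤ K * ∑ t ∈ Finset.range T, δ t := by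
  rw [← Finset.sum_sub_distrib, Finset.mul_sum]
  exact Finset.sum_le_sum fun t _ =>
    (le_abs_self _).trans ((hl _ _ _).trans (mul_le_mul_of_nonneg_left (hδ t) hK))

theorem d2eal_social_regret_best_expert_general
    {n : ℕ} {Y : Type*} {N : ℕ}
    (A : Set (EuclideanSpace ℝ (Fin n))) (hA : Convex ℝ A)
    (l : EuclideanSpace ℝ (Fin n) → Y → ℝ)
    (hl01 : ∀ x ∈ A, ∀ y : Y, l x y ∈ Set.Icc (0:ℝ) 1)
    (hconv : ∀ y : Y, ConvexOn ℝ A (fun x => l x y))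
    -- Assumption 2: Lipschitz loss
    (L1 : ℝ) (hL1 : 0 ≤ L1)
    (hLip : ∀ (x1 x2 : EuclideanSpace ℝ (Fin n)) (y : Y),
      |l x1 y - l x2 y| ≤ L1 * ‖x1 - x2‖)
    (ηα ηw : ℝ) (hηα : 0 < ηα) (hηw : 0 < ηw) (T : ℕ)
    -- expert predictions and target sequence
    (f : ℕ → Fin N → EuclideanSpace ℝ (Fin n)) (y : ℕ → Y)
    (hfA : ∀ t j, f t j ∈ A)
    -- Assumption 3: pairwise expert prediction gaps
    (δ : ℕ → ℝ) (Δo : ℝ)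
    (hδ : ∀ t, ∀ i j : Fin N, ‖f t i - f t j‖ ≤ δ t)
    (hΔo : (∑ t ∈ Finset.range T, δ (t+1)) ≤ Δo)
    -- Assumption 1: shrinking neighborhoods, each agent is its own neighbour
    (Λ : Fin N → ℕ → Finset (Fin N))
    (hΛself : ∀ i t, i ∈ Λ i t)
    (hΛshrink : ∀ i t, Λ i (t+1) ⊆ Λ i t)
    -- experts' cumulative losses
    (L : ℕ → Fin N → ℝ)
    (hL : ∀ t j, L t j = ∑ s ∈ Finset.range t, l (f (s+1) j) (y (s+1)))
    -- each agent's social predictions and related cumulative losses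
    (fhat : Fin N → ℕ → EuclideanSpace ℝ (Fin n))
    (hfhatA : ∀ j t, fhat j t ∈ A)
    (Lm : ℕ → Fin N → ℝ)
    (hLm : ∀ t j, Lm t j = ∑ s ∈ Finset.range t, l (fhat j s) (y (s+1)))
    -- first-layer exponential weights
    (α : ℕ → Fin N → ℝ)
    (hα : ∀ t j, α t j =
      Real.exp (-ηα * L t j) / (Real.exp (-ηα * L t j) + Real.exp (-ηα * Lm t j)))
    -- individual predictions and their cumulative losses
    (barf : ℕ → Fin N → EuclideanSpace ℝ (Fin n))
    (hbarf : ∀ t j, barf (t+1) j = α t j • f (t+1) j + (1 - α t j) • fhat j t)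
    (barL : ℕ → Fin N → ℝ)
    (hbarL : ∀ t j, barL t j = ∑ s ∈ Finset.range t, l (barf (s+1) j) (y (s+1)))
    -- second-layer (social) exponential weights and social prediction
    (w : Fin N → ℕ → Fin N → ℝ)
    (hw : ∀ i t j, w i t j =
      Real.exp (-ηw * barL t j) / ∑ j' ∈ Λ i t, Real.exp (-ηw * barL t j'))
    (hfhat : ∀ i t, fhat i (t+1) = ∑ j ∈ Λ i t, w i t j • barf (t+1) j)
    -- agent i's social cumulative loss
    (i : Fin N)
    (hatL : ℕ → ℝ)
    (hhatL : ∀ t, hatL t = ∑ s ∈ Finset.range t, l (fhat i (s+1)) (y (s+1)))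
    -- best expert
    (istar : Fin N) :
    hatL T - L T istar
      ≤ ηw * T / 8 + Real.log ((Λ i 0).card) / ηw
        + ηα * T / 8 + Real.log 2 / ηα + L1 * Δo := by
  have hα01 : ∀ t j, α t j ∈ Set.Icc (0 : ℝ) 1 := fun t j => by
    rw [hα]
    exact ⟨by positivity,
      div_le_one_of_le₀ (le_add_of_nonneg_right (exp_pos _).le) (by positivity)⟩
  have hbarf_mem : ∀ t j, barf (t + 1) j ∈ A := fun t j => by
    rw [hbarf]
    exact hA (hfA _ _) (hfhatA _ _) (hα01 t j).1 (sub_nonneg.2 (hα01 t j).2) (by ring)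
  have hindividual : barL T i ≤ L T i + ηα * T / 8 + log 2 / ηα := by
    rw [hbarL, hL]
    refine (Finset.sum_le_sum fun t _ => ?_).trans (hedge_two_regret_le hηα _ _
      (fun t => hl01 _ (hfA _ _) _) (fun t => hl01 _ (hfhatA _ _) _) (α · i)
      (fun t => by rw [hα, hL, hLm]) T)
    rw [hbarf]
    exact (hconv _).2 (hfA _ _) (hfhatA _ _) (hα01 t i).1 (sub_nonneg.2 (hα01 t i).2) (by ring)
  have hsocial : hatL T ≤ barL T i + ηw * T / 8 + log (Λ i 0).card / ηw := by
    rw [hhatL, hbarL]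
    refine (Finset.sum_le_sum fun t _ => ?_).trans (hedge_regret_le hηw (Λ i) (hΛshrink i)
      (fun t j => l (barf (t + 1) j) (y (t + 1))) (fun t j _ => hl01 _ (hbarf_mem t j) _) T
      (hΛself i T))
    have hweight : ∀ j, w i t j = expWeight ηw (Λ i t)
        (fun k => ∑ s ∈ Finset.range t, l (barf (s + 1) k) (y (s + 1))) j := fun j => by
      simp only [hw, hbarL]
      rfl
    simpa only [hfhat, hweight, smul_eq_mul] using (hconv _).map_sum_le
      (fun j _ => expWeight_nonneg _ _ _ j) (sum_expWeight _ ⟨i, hΛself i t⟩ _)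
      (fun j _ => hbarf_mem t j)
  have hexpert : L T i - L T istar ≤ L1 * Δo := by
    rw [hL, hL]
    exact (sum_sub_sum_le_of_lipschitz hL1 hLip _ (fun t => hδ (t + 1) i istar) T).trans
      (mul_le_mul_of_nonneg_left hΔo hL1)
  linarith

/-- Corollary 3 of D2EAL: social prediction regret of agent i
with respect to the best expert. -/
theorem d2eal_social_regret_best_expert
    {n : ℕ} {Y : Type*} {N : ℕ}
    (A : Set (EuclideanSpace ℝ (Fin n))) (hA : Convex ℝ A)
    (l : EuclideanSpace ℝ (Fin n) → Y → ℝ)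
    (hl01 : ∀ x ∈ A, ∀ y : Y, l x y ∈ Set.Icc (0:ℝ) 1)
    (hconv : ∀ y : Y, ConvexOn ℝ A (fun x => l x y))
    -- Assumption 2: Lipschitz loss
    (L1 : ℝ) (hL1 : 0 ≤ L1)
    (hLip : ∀ (x1 x2 : EuclideanSpace ℝ (Fin n)) (y : Y),
      |l x1 y - l x2 y| ≤ L1 * ‖x1 - x2‖)
    (ηα ηw : ℝ) (hηα : 0 < ηα) (hηw : 0 < ηw) (T : ℕ) (hT : 1 ≤ T)
    -- expert predictions and target sequence
    (f : ℕ → Fin N → EuclideanSpace ℝ (Fin n)) (y : ℕ → Y)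
    (hfA : ∀ t j, f t j ∈ A)
    -- Assumption 3: pairwise expert prediction gaps
    (δ : ℕ → ℝ) (Δo : ℝ)
    (hδ : ∀ t, ∀ i j : Fin N, ‖f t i - f t j‖ ≤ δ t)
    (hΔo : (∑ t ∈ Finset.range T, δ (t+1)) ≤ Δo)
    -- Assumption 1: shrinking neighborhoods, each agent is its own neighbour
    (Λ : Fin N → ℕ → Finset (Fin N))
    (hΛself : ∀ i t, i ∈ Λ i t)
    (hΛshrink : ∀ i t, Λ i (t+1) ⊆ Λ i t)
    -- experts' cumulative losses
    (L : ℕ → Fin N → ℝ)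
    (hL : ∀ t j, L t j = ∑ s ∈ Finset.range t, l (f (s+1) j) (y (s+1)))
    -- each agent's social predictions and related cumulative losses
    (fhat : Fin N → ℕ → EuclideanSpace ℝ (Fin n))
    (hfhatA : ∀ j t, fhat j t ∈ A)
    (Lm : ℕ → Fin N → ℝ)
    (hLm : ∀ t j, Lm t j = ∑ s ∈ Finset.range t, l (fhat j s) (y (s+1)))
    -- first-layer exponential weights
    (α : ℕ → Fin N → ℝ)
    (hα : ∀ t j, α t j =
      Real.exp (-ηα * L t j) / (Real.exp (-ηα * L t j) + Real.exp (-ηα * Lm t j)))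
    -- individual predictions and their cumulative losses
    (barf : ℕ → Fin N → EuclideanSpace ℝ (Fin n))
    (hbarf : ∀ t j, barf (t+1) j = α t j • f (t+1) j + (1 - α t j) • fhat j t)
    (barL : ℕ → Fin N → ℝ)
    (hbarL : ∀ t j, barL t j = ∑ s ∈ Finset.range t, l (barf (s+1) j) (y (s+1)))
    -- second-layer (social) exponential weights and social prediction
    (w : Fin N → ℕ → Fin N → ℝ)
    (hw : ∀ i t j, w i t j =
      Real.exp (-ηw * barL t j) / ∑ j' ∈ Λ i t, Real.exp (-ηw * barL t j'))
    (hfhat : ∀ i t, fhat i (t+1) = ∑ j ∈ Λ i t, w i t j • barf (t+1) j)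
    -- agent i's social cumulative loss
    (i : Fin N)
    (hatL : ℕ → ℝ)
    (hhatL : ∀ t, hatL t = ∑ s ∈ Finset.range t, l (fhat i (s+1)) (y (s+1)))
    -- best expert
    (istar : Fin N) (histar : ∀ j : Fin N, L T istar ≤ L T j) :
    hatL T - L T istar
      ≤ ηw * T / 8 + Real.log ((Λ i 0).card) / ηw
        + ηα * T / 8 + Real.log 2 / ηα + L1 * Δo :=
  d2eal_social_regret_best_expert_general A hA l hl01 hconv L1 hL1 hLip ηα ηw hηα hηw T f y hfA δ Δo
    hδ hΔo Λ hΛself hΛshrink L hL fhat hfhatA Lm hLm α hα barf hbarf barL hbarL w hw hfhat i hatL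
    hhatL istar
end

section
/- Under Assumptions 1-4 (where Assumption 4 states the best expert's cumulative loss satisfies L_{T,i*} ≤ c_0 T^{1-α} for some α ∈ (0,1]), the D2EAL social prediction global regret satisfies \hat{L}_{T,i} - \bar{L}_{T,j*} ≤ η_w T/8 + (log d_i(0))/η_w + η_α T/8 + (log 2)/η_α + L1·Δ_o + c_0 T^{1-α}, where j* = argmin_{j∈[N]} \bar{L}_{T,j}. -/
/-!
Each layer of D2EAL is an exponentially weighted average forecaster with losses in `[0, 1]`:
the first layer mixes expert `i` with agent `i`'s previous social prediction, the second mixes the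
individual predictions over the neighbourhood `Λ i t`. By convexity of the loss and Hoeffding's
lemma, every round raises `-log (∑ exp (-η • cumulative loss)) / η` by at least the forecaster's
loss minus `η / 8`; shrinking the set of experts only raises it further. Hence each layer's
regret against an expert it keeps is at most `η T / 8 + log (#experts) / η`. Chaining the two
layers with the Lipschitz bound `L T i ≤ L T i* + L1 Δo`, Assumption 4 and `0 ≤ barL T j*` gives
the claim.
-/

section Hoeffding

open MeasureTheory ProbabilityTheory Real

lemma integral_sum_smul_dirac {ι : Type*} [MeasurableSpace ι] [DiscreteMeasurableSpace ι]
    (S : Finset ι) (p g : ι → ℝ) (hp : ∀ j ∈ S, 0 ≤ p j) :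
    ∫ j, g j ∂(∑ j ∈ S, ENNReal.ofReal (p j) • Measure.dirac j) = ∑ j ∈ S, p j * g j := by
  rw [integral_finsetSum_measure]
  · refine Finset.sum_congr rfl fun j hj => ?_
    simp [hp j hj]
  · exact fun _ _ ↦ (integrable_dirac (by simp)).smul_measure (by simp)

theorem sum_mul_exp_le_exp_of_mem_Icc {ι : Type*} (S : Finset ι) (p x : ι → ℝ)
    (hp : ∀ j ∈ S, 0 ≤ p j) (hp1 : ∑ j ∈ S, p j = 1) (hx : ∀ j ∈ S, x j ∈ Set.Icc (0 : ℝ) 1)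
    (t : ℝ) :
    ∑ j ∈ S, p j * exp (t * x j) ≤ exp (t * ∑ j ∈ S, p j * x j + t ^ 2 / 8) := by
  let _ : MeasurableSpace ι := ⊤
  set μ : Measure ι := ∑ j ∈ S, ENNReal.ofReal (p j) • Measure.dirac j
  have hμ : ∀ g : ι → ℝ, ∫ j, g j ∂μ = ∑ j ∈ S, p j * g j :=
    fun g => integral_sum_smul_dirac S p g hp
  have : IsProbabilityMeasure μ := by
    constructor
    simp only [μ, Measure.coe_finsetSum, Measure.coe_smul, Finset.sum_apply, Pi.smul_apply,
      Measure.dirac_apply_of_mem (Set.mem_univ _), smul_eq_mul, mul_one]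
    rw [← ENNReal.ofReal_sum_of_nonneg hp, hp1, ENNReal.ofReal_one]
  have hxμ : ∀ᵐ j ∂μ, x j ∈ Set.Icc (0 : ℝ) 1 := by
    rw [ae_iff]
    simp only [μ, Measure.coe_finsetSum, Measure.coe_smul, Finset.sum_apply, Pi.smul_apply,
      Measure.dirac_apply, smul_eq_mul]
    exact Finset.sum_eq_zero fun j hj => by simp [(hx j hj).1, (hx j hj).2]
  have h := (hasSubgaussianMGF_of_mem_Icc Measurable.of_discrete.aemeasurable hxμ).mgf_le t
  rw [mgf, hμ, hμ] at h
  calc ∑ j ∈ S, p j * exp (t * x j)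
      = exp (t * ∑ j ∈ S, p j * x j) *
          ∑ j ∈ S, p j * exp (t * (x j - ∑ j ∈ S, p j * x j)) := by
        rw [Finset.mul_sum]
        refine Finset.sum_congr rfl fun j _ => ?_
        rw [mul_left_comm, ← exp_add]
        ring_nf
    _ ≤ exp (t * ∑ j ∈ S, p j * x j) * exp (t ^ 2 / 8) := by
        gcongr
        refine h.trans_eq ?_
        norm_num
        ring
    _ = _ := (exp_add _ _).symm

end Hoeffding

namespace ExpWeights

open Real

variable {ι : Type*}

noncomputable def potential (η : ℝ) (S : Finset ι) (C : ι → ℝ) : ℝ := ∑ j ∈ S, exp (-η * C j)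

noncomputable def weight (η : ℝ) (S : Finset ι) (C : ι → ℝ) (j : ι) : ℝ :=
  exp (-η * C j) / potential η S C

variable {η : ℝ} {S : Finset ι} {C : ι → ℝ} {j : ι}

theorem potential_pos (hj : j ∈ S) : 0 < potential η S C :=
  Finset.sum_pos (fun _ _ => exp_pos _) ⟨j, hj⟩

theorem weight_nonneg (k : ι) : 0 ≤ weight η S C k :=
  div_nonneg (exp_pos _).le (Finset.sum_nonneg fun _ _ => (exp_pos _).le)

theorem sum_weight (hj : j ∈ S) : ∑ k ∈ S, weight η S C k = 1 := by
  simp only [weight, ← Finset.sum_div]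
  exact div_self (potential_pos hj).ne'

theorem potential_add (ℓ : ι → ℝ) (hj : j ∈ S) :
    potential η S (C + ℓ) = potential η S C * ∑ k ∈ S, weight η S C k * exp (-η * ℓ k) := by
  simp only [weight, div_mul_eq_mul_div, ← Finset.sum_div,
    mul_div_cancel₀ _ (potential_pos hj).ne']
  refine Finset.sum_congr rfl fun k _ => ?_
  rw [← exp_add, Pi.add_apply, mul_add]

theorem sum_weight_mul_le (hη : 0 < η) (hj : j ∈ S) {ℓ : ι → ℝ}
    (hℓ : ∀ k ∈ S, ℓ k ∈ Set.Icc (0 : ℝ) 1) :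
    ∑ k ∈ S, weight η S C k * ℓ k
      ≤ η / 8 + log (potential η S C) / η - log (potential η S (C + ℓ)) / η := by
  have hΦ := potential_pos (η := η) (C := C) hj
  have hmix := sum_mul_exp_le_exp_of_mem_Icc S (weight η S C) ℓ (fun k _ => weight_nonneg k)
    (sum_weight hj) hℓ (-η)
  have hlog : log (potential η S (C + ℓ))
      ≤ log (potential η S C) - η * ∑ k ∈ S, weight η S C k * ℓ k + η ^ 2 / 8 := by
    have hpos : 0 < ∑ k ∈ S, weight η S C k * exp (-η * ℓ k) :=
      Finset.sum_pos (fun _ _ => mul_pos (div_pos (exp_pos _) hΦ) (exp_pos _)) ⟨j, hj⟩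
    rw [potential_add ℓ hj, log_mul hΦ.ne' hpos.ne']
    have := (log_le_iff_le_exp hpos).2 hmix
    linarith
  rw [← sub_nonneg]
  have : η / 8 + log (potential η S C) / η - log (potential η S (C + ℓ)) / η
      - ∑ k ∈ S, weight η S C k * ℓ k
      = (η ^ 2 / 8 + log (potential η S C) - log (potential η S (C + ℓ))
          - η * ∑ k ∈ S, weight η S C k * ℓ k) / η := by
    field_simp
  rw [this]
  exact div_nonneg (by linarith) hη.le

theorem regret_le {S : ℕ → Finset ι} (hS : Antitone S) {ℓ : ℕ → ι → ℝ}
    (hℓ : ∀ t, ∀ k ∈ S t, ℓ t k ∈ Set.Icc (0 : ℝ) 1) (hη : 0 < η)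
    {C : ℕ → ι → ℝ} (hC : ∀ t k, C t k = ∑ s ∈ Finset.range t, ℓ s k) {ℓhat : ℕ → ℝ}
    (hmix : ∀ t, ℓhat t ≤ ∑ k ∈ S t, weight η (S t) (C t) k * ℓ t k) {T : ℕ} (hj : j ∈ S T) :
    ∑ t ∈ Finset.range T, ℓhat t ≤ C T j + η * T / 8 + log (S 0).card / η := by
  have hC_succ : ∀ t, C (t + 1) = C t + ℓ t := fun t => funext fun k => by
    rw [Pi.add_apply, hC, hC, Finset.sum_range_succ]
  have htelescope : ∀ T, j ∈ S T → ∑ t ∈ Finset.range T, ℓhat t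
      ≤ η * T / 8 + log (potential η (S 0) (C 0)) / η - log (potential η (S T) (C T)) / η := by
    intro T
    induction T with
    | zero => intro; simp
    | succ T ih =>
      intro hjT
      have hjT' : j ∈ S T := hS T.le_succ hjT
      have hshrink : log (potential η (S (T + 1)) (C (T + 1)))
          ≤ log (potential η (S T) (C T + ℓ T)) := by
        rw [hC_succ]
        exact log_le_log (potential_pos hjT) (Finset.sum_le_sum_of_subset_of_nonneg
          (hS T.le_succ) fun _ _ _ => (exp_pos _).le)
      have hstep := (hmix T).trans (sum_weight_mul_le hη hjT' (hℓ T))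
      have := div_le_div_of_nonneg_right hshrink hη.le
      rw [Finset.sum_range_succ]
      push_cast
      linarith [ih hjT']
  have hΦ₀ : potential η (S 0) (C 0) = (S 0).card := by simp [potential, hC]
  have hΦT : -η * C T j ≤ log (potential η (S T) (C T)) := by
    rw [← log_exp (-η * C T j)]
    exact log_le_log (exp_pos _) (Finset.single_le_sum (f := fun k => exp (-η * C T k))
      (fun _ _ => (exp_pos _).le) hj)
  have hΦT' : -C T j ≤ log (potential η (S T) (C T)) / η := by
    rw [le_div_iff₀ hη]; linarith
  have := htelescope T hj
  rw [hΦ₀] at this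
  linarith

theorem regret_le_two {ℓ₁ ℓ₂ : ℕ → ℝ} (hℓ₁ : ∀ t, ℓ₁ t ∈ Set.Icc (0 : ℝ) 1)
    (hℓ₂ : ∀ t, ℓ₂ t ∈ Set.Icc (0 : ℝ) 1) (hη : 0 < η) {C₁ C₂ : ℕ → ℝ}
    (hC₁ : ∀ t, C₁ t = ∑ s ∈ Finset.range t, ℓ₁ s) (hC₂ : ∀ t, C₂ t = ∑ s ∈ Finset.range t, ℓ₂ s)
    {α : ℕ → ℝ} (hα : ∀ t, α t = exp (-η * C₁ t) / (exp (-η * C₁ t) + exp (-η * C₂ t)))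
    {ℓhat : ℕ → ℝ} (hmix : ∀ t, ℓhat t ≤ α t * ℓ₁ t + (1 - α t) * ℓ₂ t) (T : ℕ) :
    ∑ t ∈ Finset.range T, ℓhat t ≤ C₁ T + η * T / 8 + log 2 / η := by
  let C : ℕ → Bool → ℝ := fun t b => bif b then C₁ t else C₂ t
  have hweight : ∀ t, weight η Finset.univ (C t) true = α t := fun t => by
    simp [weight, potential, C, hα]
  have hweight' : ∀ t, weight η Finset.univ (C t) false = 1 - α t := fun t => by
    have := sum_weight (η := η) (C := C t) (Finset.mem_univ true)
    rw [Fintype.sum_bool, hweight] at this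
    linarith
  simpa [C] using regret_le (S := fun _ => Finset.univ)
    (ℓ := fun t b => bif b then ℓ₁ t else ℓ₂ t) (C := C) (ℓhat := ℓhat) antitone_const
    (fun t b _ => by cases b <;> simp [hℓ₁, hℓ₂]) hη
    (fun t b => by cases b <;> simp [C, hC₁, hC₂])
    (fun t => by rw [Fintype.sum_bool, hweight, hweight']; exact hmix t) (Finset.mem_univ true)

end ExpWeights

theorem sum_le_sum_add_mul_sum_of_lipschitz {ι E Y : Type*} [SeminormedAddCommGroup E]
    {l : E → Y → ℝ} {K : ℝ} (hK : 0 ≤ K) (hl : ∀ x₁ x₂ y, |l x₁ y - l x₂ y| ≤ K * ‖x₁ - x₂‖)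
    {x x' : ι → E} {δ : ι → ℝ} (hδ : ∀ t, ‖x t - x' t‖ ≤ δ t) (y : ι → Y) (s : Finset ι) :
    ∑ t ∈ s, l (x t) (y t) ≤ ∑ t ∈ s, l (x' t) (y t) + K * ∑ t ∈ s, δ t := by
  rw [Finset.mul_sum, ← Finset.sum_add_distrib]
  gcongr with t
  linarith [le_abs_self (l (x t) (y t) - l (x' t) (y t)), hl (x t) (x' t) (y t),
    mul_le_mul_of_nonneg_left (hδ t) hK]

theorem d2eal_social_global_regret_general
    {n : ℕ} {Y : Type*} {N : ℕ}
    (A : Set (EuclideanSpace ℝ (Fin n))) (hA : Convex ℝ A)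
    (l : EuclideanSpace ℝ (Fin n) → Y → ℝ)
    (hl01 : ∀ x ∈ A, ∀ y : Y, l x y ∈ Set.Icc (0:ℝ) 1)
    (hconv : ∀ y : Y, ConvexOn ℝ A (fun x => l x y))
    -- Assumption 2: Lipschitz loss
    (L1 : ℝ) (hL1 : 0 ≤ L1)
    (hLip : ∀ (x1 x2 : EuclideanSpace ℝ (Fin n)) (y : Y),
      |l x1 y - l x2 y| ≤ L1 * ‖x1 - x2‖)
    (ηα ηw : ℝ) (hηα : 0 < ηα) (hηw : 0 < ηw) (T : ℕ)
    -- expert predictions and target sequence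
    (f : ℕ → Fin N → EuclideanSpace ℝ (Fin n)) (y : ℕ → Y)
    (hfA : ∀ t j, f t j ∈ A)
    -- Assumption 3: pairwise expert prediction gaps
    (δ : ℕ → ℝ) (Δo : ℝ)
    (hδ : ∀ t, ∀ i j : Fin N, ‖f t i - f t j‖ ≤ δ t)
    (hΔo : (∑ t ∈ Finset.range T, δ (t+1)) ≤ Δo)
    -- Assumption 1: shrinking neighborhoods, each agent is its own neighbour
    (Λ : Fin N → ℕ → Finset (Fin N))
    (hΛself : ∀ i t, i ∈ Λ i t)
    (hΛshrink : ∀ i t, Λ i (t+1) ⊆ Λ i t)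
    -- experts' cumulative losses
    (L : ℕ → Fin N → ℝ)
    (hL : ∀ t j, L t j = ∑ s ∈ Finset.range t, l (f (s+1) j) (y (s+1)))
    -- each agent's social predictions and related cumulative losses
    (fhat : Fin N → ℕ → EuclideanSpace ℝ (Fin n))
    (hfhatA : ∀ j t, fhat j t ∈ A)
    (Lm : ℕ → Fin N → ℝ)
    (hLm : ∀ t j, Lm t j = ∑ s ∈ Finset.range t, l (fhat j s) (y (s+1)))
    -- first-layer exponential weights
    (α : ℕ → Fin N → ℝ)
    (hα : ∀ t j, α t j =
      Real.exp (-ηα * L t j) / (Real.exp (-ηα * L t j) + Real.exp (-ηα * Lm t j)))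
    -- individual predictions and their cumulative losses
    (barf : ℕ → Fin N → EuclideanSpace ℝ (Fin n))
    (hbarf : ∀ t j, barf (t+1) j = α t j • f (t+1) j + (1 - α t j) • fhat j t)
    (barL : ℕ → Fin N → ℝ)
    (hbarL : ∀ t j, barL t j = ∑ s ∈ Finset.range t, l (barf (s+1) j) (y (s+1)))
    -- second-layer (social) exponential weights and social prediction
    (w : Fin N → ℕ → Fin N → ℝ)
    (hw : ∀ i t j, w i t j =
      Real.exp (-ηw * barL t j) / ∑ j' ∈ Λ i t, Real.exp (-ηw * barL t j'))
    (hfhat : ∀ i t, fhat i (t+1) = ∑ j ∈ Λ i t, w i t j • barf (t+1) j)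
    -- agent i's social cumulative loss
    (i : Fin N)
    (hatL : ℕ → ℝ)
    (hhatL : ∀ t, hatL t = ∑ s ∈ Finset.range t, l (fhat i (s+1)) (y (s+1)))
    -- best expert and Assumption 4: sub-linear best expert cumulative loss
    (istar : Fin N)
    (c0 a : ℝ)
    (hsublin : L T istar ≤ c0 * (T : ℝ) ^ (1 - a))
    -- best individual prediction in the network
    (jstar : Fin N) :
    hatL T - barL T jstar
      ≤ ηw * T / 8 + Real.log ((Λ i 0).card) / ηw
        + ηα * T / 8 + Real.log 2 / ηα + L1 * Δo + c0 * (T : ℝ) ^ (1 - a) := by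
  have hα01 : ∀ t j, 0 ≤ α t j ∧ α t j ≤ 1 := fun t j => by
    rw [hα]
    exact ⟨by positivity,
      div_le_one_of_le₀ (le_add_of_nonneg_right (Real.exp_pos _).le) (by positivity)⟩
  have hbarfA : ∀ t j, barf (t+1) j ∈ A := fun t j => by
    rw [hbarf]
    exact hA (hfA _ _) (hfhatA _ _) (hα01 t j).1 (sub_nonneg.2 (hα01 t j).2) (by ring)
  have hsocial : hatL T ≤ barL T i + ηw * T / 8 + Real.log (Λ i 0).card / ηw := by
    have hw' : ∀ t, w i t = ExpWeights.weight ηw (Λ i t) (barL t) := fun t => funext (hw i t)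
    rw [hhatL]
    refine ExpWeights.regret_le (antitone_nat_of_succ_le (hΛshrink i))
      (fun t j _ => hl01 _ (hbarfA t j) _) hηw hbarL (fun t => ?_) (hΛself i T)
    rw [hfhat, hw']
    exact (hconv _).map_sum_le (fun j _ => ExpWeights.weight_nonneg j)
      (ExpWeights.sum_weight (hΛself i t)) (fun j _ => hbarfA t j)
  have hindividual : barL T i ≤ L T i + ηα * T / 8 + Real.log 2 / ηα := by
    rw [hbarL]
    refine ExpWeights.regret_le_two (fun t => hl01 _ (hfA _ _) _) (fun t => hl01 _ (hfhatA _ _) _)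
      hηα (fun t => hL t i) (fun t => hLm t i) (fun t => hα t i) (fun t => ?_) T
    rw [hbarf]
    exact (hconv _).2 (hfA _ _) (hfhatA _ _) (hα01 t i).1 (sub_nonneg.2 (hα01 t i).2) (by ring)
  have hexpert : L T i ≤ L T istar + L1 * Δo := by
    rw [hL, hL]
    calc _ ≤ _ + L1 * ∑ t ∈ Finset.range T, δ (t+1) :=
          sum_le_sum_add_mul_sum_of_lipschitz hL1 hLip (fun t => hδ (t+1) i istar) _ _
      _ ≤ _ := by gcongr
  have hnonneg : 0 ≤ barL T jstar :=
    (hbarL T jstar).symm ▸ Finset.sum_nonneg fun s _ => (hl01 _ (hbarfA s jstar) _).1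
  linarith

/-- Theorem 2 of D2EAL: social prediction global regret bound
under Assumptions 1-4. -/
theorem d2eal_social_global_regret
    {n : ℕ} {Y : Type*} {N : ℕ}
    (A : Set (EuclideanSpace ℝ (Fin n))) (hA : Convex ℝ A)
    (l : EuclideanSpace ℝ (Fin n) → Y → ℝ)
    (hl01 : ∀ x ∈ A, ∀ y : Y, l x y ∈ Set.Icc (0:ℝ) 1)
    (hconv : ∀ y : Y, ConvexOn ℝ A (fun x => l x y))
    -- Assumption 2: Lipschitz loss
    (L1 : ℝ) (hL1 : 0 ≤ L1)
    (hLip : ∀ (x1 x2 : EuclideanSpace ℝ (Fin n)) (y : Y),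
      |l x1 y - l x2 y| ≤ L1 * ‖x1 - x2‖)
    (ηα ηw : ℝ) (hηα : 0 < ηα) (hηw : 0 < ηw) (T : ℕ) (hT : 1 ≤ T)
    -- expert predictions and target sequence
    (f : ℕ → Fin N → EuclideanSpace ℝ (Fin n)) (y : ℕ → Y)
    (hfA : ∀ t j, f t j ∈ A)
    -- Assumption 3: pairwise expert prediction gaps
    (δ : ℕ → ℝ) (Δo : ℝ)
    (hδ : ∀ t, ∀ i j : Fin N, ‖f t i - f t j‖ ≤ δ t)
    (hΔo : (∑ t ∈ Finset.range T, δ (t+1)) ≤ Δo)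
    -- Assumption 1: shrinking neighborhoods, each agent is its own neighbour
    (Λ : Fin N → ℕ → Finset (Fin N))
    (hΛself : ∀ i t, i ∈ Λ i t)
    (hΛshrink : ∀ i t, Λ i (t+1) ⊆ Λ i t)
    -- experts' cumulative losses
    (L : ℕ → Fin N → ℝ)
    (hL : ∀ t j, L t j = ∑ s ∈ Finset.range t, l (f (s+1) j) (y (s+1)))
    -- each agent's social predictions and related cumulative losses
    (fhat : Fin N → ℕ → EuclideanSpace ℝ (Fin n))
    (hfhatA : ∀ j t, fhat j t ∈ A)
    (Lm : ℕ → Fin N → ℝ)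
    (hLm : ∀ t j, Lm t j = ∑ s ∈ Finset.range t, l (fhat j s) (y (s+1)))
    -- first-layer exponential weights
    (α : ℕ → Fin N → ℝ)
    (hα : ∀ t j, α t j =
      Real.exp (-ηα * L t j) / (Real.exp (-ηα * L t j) + Real.exp (-ηα * Lm t j)))
    -- individual predictions and their cumulative losses
    (barf : ℕ → Fin N → EuclideanSpace ℝ (Fin n))
    (hbarf : ∀ t j, barf (t+1) j = α t j • f (t+1) j + (1 - α t j) • fhat j t)
    (barL : ℕ → Fin N → ℝ)
    (hbarL : ∀ t j, barL t j = ∑ s ∈ Finset.range t, l (barf (s+1) j) (y (s+1)))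
    -- second-layer (social) exponential weights and social prediction
    (w : Fin N → ℕ → Fin N → ℝ)
    (hw : ∀ i t j, w i t j =
      Real.exp (-ηw * barL t j) / ∑ j' ∈ Λ i t, Real.exp (-ηw * barL t j'))
    (hfhat : ∀ i t, fhat i (t+1) = ∑ j ∈ Λ i t, w i t j • barf (t+1) j)
    -- agent i's social cumulative loss
    (i : Fin N)
    (hatL : ℕ → ℝ)
    (hhatL : ∀ t, hatL t = ∑ s ∈ Finset.range t, l (fhat i (s+1)) (y (s+1)))
    -- best expert and Assumption 4: sub-linear best expert cumulative loss
    (istar : Fin N) (histar : ∀ j : Fin N, L T istar ≤ L T j)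
    (c0 a : ℝ) (hc0 : 0 ≤ c0) (ha : a ∈ Set.Ioc (0:ℝ) 1)
    (hsublin : L T istar ≤ c0 * (T : ℝ) ^ (1 - a))
    -- best individual prediction in the network
    (jstar : Fin N) (hjstar : ∀ j : Fin N, barL T jstar ≤ barL T j) :
    hatL T - barL T jstar
      ≤ ηw * T / 8 + Real.log ((Λ i 0).card) / ηw
        + ηα * T / 8 + Real.log 2 / ηα + L1 * Δo + c0 * (T : ℝ) ^ (1 - a) :=
  d2eal_social_global_regret_general A hA l hl01 hconv L1 hL1 hLip ηα ηw hηα hηw T f y hfA δ Δo hδ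
    hΔo Λ hΛself hΛshrink L hL fhat hfhatA Lm hLm α hα barf hbarf barL hbarL w hw hfhat i hatL hhatL
    istar c0 a hsublin jstar
end
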